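/- arXiv:2411.16260 — 2 statements merged into one kernel-verified Lean document; each statement's English description precedes it below -/
import Mathlib

section
/- Theorem 1 (Commutativity — invariance to input permutations): under the weight assignment W_q = W_k = 0, b_q = b_k = (fun _ => 1), W_v = 1 (the identity matrix), b_v = 0, with 0 < D and 0 < L, for every operand sequence z : Fin M → Fin n, every permutation σ : Equiv.Perm (Fin M), and every position t : Fin L, the attention outputs of the embedded sequences coincide: s t (e_{z ∘ σ}) = s t (e_z). In other words, the hidden state produced by this attention layer is invariant to permutations of the input operand tokens. -/
/-! With zero query and key weights every query–key score equals `bq ⬝ᵥ bk`, so attention is a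
uniform average of the values and depends on the embeddings `e` only through `∑ i, e i`. For an
embedded operand sequence this sum is `∑ i, b i + ∑ m, W (z m)`, which does not change when the
operands are permuted. -/

open Matrix

/-- The output of a single attention layer at position `t`, given weight matrices
`Wq Wk Wv`, bias vectors `bq bk bv`, and an embedding sequence `e`. -/
noncomputable def attnOut (D L : ℕ)
    (Wq Wk Wv : Matrix (Fin D) (Fin D) ℝ) (bq bk bv : Fin D → ℝ)
    (e : Fin L → (Fin D → ℝ)) (t : Fin L) : Fin D → ℝ :=
  let q : Fin L → (Fin D → ℝ) := fun i => Wq.mulVec (e i) + bq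
  let k : Fin L → (Fin D → ℝ) := fun i => Wk.mulVec (e i) + bk
  let v : Fin L → (Fin D → ℝ) := fun i => Wv.mulVec (e i) + bv
  ∑ i : Fin L, ((q t ⬝ᵥ k i) / (∑ j : Fin L, q t ⬝ᵥ k j)) • v i

theorem attnOut_zero_query_key (D L : ℕ) (Wv : Matrix (Fin D) (Fin D) ℝ) (bq bk bv : Fin D → ℝ)
    (e : Fin L → (Fin D → ℝ)) (t : Fin L) :
    attnOut D L 0 0 Wv bq bk bv e t
      = ((bq ⬝ᵥ bk) / (L * (bq ⬝ᵥ bk))) • ∑ i, (Wv *ᵥ e i + bv) := by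
  simp only [attnOut, zero_mulVec, zero_add, Finset.sum_const, Finset.card_univ, Fintype.card_fin,
    nsmul_eq_mul, Finset.smul_sum]

theorem attnOut_zero_query_key_congr (D L : ℕ) (Wv : Matrix (Fin D) (Fin D) ℝ)
    (bq bk bv : Fin D → ℝ) {e e' : Fin L → (Fin D → ℝ)} (h : ∑ i, e i = ∑ i, e' i) (t : Fin L) :
    attnOut D L 0 0 Wv bq bk bv e t = attnOut D L 0 0 Wv bq bk bv e' t := by
  simp only [attnOut_zero_query_key, Finset.sum_add_distrib, ← mulVec_sum, h]

theorem Fintype.sum_eq_sum_add_sum_of_injective {α β G : Type*} [Fintype α] [Fintype β]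
    [AddCommGroup G] {ι : β → α} (hι : Function.Injective ι) {e b : α → G} (w : β → G)
    (h_range : ∀ m, e (ι m) = b (ι m) + w m) (h_off : ∀ i ∉ Set.range ι, e i = b i) :
    ∑ i, e i = ∑ i, b i + ∑ m, w m := by
  have h_diff : ∑ m, w m = ∑ i, (e i - b i) :=
    Fintype.sum_of_injective ι hι w (e - b)
      (fun i hi => sub_eq_zero.2 (h_off i hi)) (fun m => by simp [h_range])
  rw [h_diff, Finset.sum_sub_distrib, add_sub_cancel]

theorem stmt3_general (D L n M : ℕ)
    (ι : Fin M → Fin L) (hι : Function.Injective ι)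
    (b : Fin L → (Fin D → ℝ)) (W : Fin n → (Fin D → ℝ))
    (eEmb : (Fin M → Fin n) → Fin L → (Fin D → ℝ))
    (hEmb₁ : ∀ z : Fin M → Fin n, ∀ m : Fin M, eEmb z (ι m) = b (ι m) + W (z m))
    (hEmb₂ : ∀ z : Fin M → Fin n, ∀ i : Fin L, i ∉ Set.range ι → eEmb z i = b i)
    (z : Fin M → Fin n) (σ : Equiv.Perm (Fin M)) (t : Fin L) :
    attnOut D L 0 0 1 (fun _ => 1) (fun _ => 1) 0 (eEmb (z ∘ σ)) t
      = attnOut D L 0 0 1 (fun _ => 1) (fun _ => 1) 0 (eEmb z) t := by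
  have h_sum (w : Fin M → Fin n) : ∑ i, eEmb w i = ∑ i, b i + ∑ m, W (w m) :=
    Fintype.sum_eq_sum_add_sum_of_injective hι _ (hEmb₁ w) (hEmb₂ w)
  refine attnOut_zero_query_key_congr D L 1 _ _ 0 ?_ t
  rw [h_sum, h_sum]
  exact congrArg _ (Equiv.sum_comp σ (W ∘ z))

theorem stmt3 (D L n M : ℕ) (hD : 0 < D) (hL : 0 < L)
    (ι : Fin M → Fin L) (hι : Function.Injective ι)
    (b : Fin L → (Fin D → ℝ)) (W : Fin n → (Fin D → ℝ))
    (eEmb : (Fin M → Fin n) → Fin L → (Fin D → ℝ))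
    (hEmb₁ : ∀ z : Fin M → Fin n, ∀ m : Fin M, eEmb z (ι m) = b (ι m) + W (z m))
    (hEmb₂ : ∀ z : Fin M → Fin n, ∀ i : Fin L, i ∉ Set.range ι → eEmb z i = b i)
    (z : Fin M → Fin n) (σ : Equiv.Perm (Fin M)) (t : Fin L) :
    attnOut D L 0 0 1 (fun _ => 1) (fun _ => 1) 0 (eEmb (z ∘ σ)) t
      = attnOut D L 0 0 1 (fun _ => 1) (fun _ => 1) 0 (eEmb z) t :=
  stmt3_general D L n M ι hι b W eEmb hEmb₁ hEmb₂ z σ t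
end

section
/- No permutation-invariant (multiset-valued) function computes the chained ⊖ operator: for all n M : ℕ with 3 ≤ n and 2 ≤ M, there is no function g : Multiset (Fin n) → ℕ such that for every list l : List (Fin n) with l.length = M, g (↑l) = ominusChain (l.map Fin.val). Hence a model whose hidden state depends only on the multiset of input tokens cannot produce correct outputs for the operator ⊖. -/
/-- The number of unit steps taken when traveling from `i` to `j` by unit
increments modulo `n` (a full loop of `n` steps when `i = j`). -/
def steps (n i j : ℕ) : ℕ := if i < j then j - i else n + j - i

/-- The number of times the element `0` is encountered while traveling from
`i` to `j` by unit increments modulo `n`. -/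
def ominus (n i j : ℕ) : ℕ :=
  ((Finset.Icc 1 (steps n i j)).filter (fun t => (i + t) % n = 0)).card

/-- The chained `⊖` value on a list of operands:
`z_{i₁} ⊖ z_{i₂} ⊖ ⋯ ⊖ z_{i_M}` is the sum of `ominus` over consecutive pairs. -/
def ominusChain (n : ℕ) : List ℕ → ℕ
  | [] => 0
  | [_] => 0
  | a :: b :: t => ominus n a b + ominusChain n (b :: t)

/-! For residues `i j < n`, the step `i ⊖ j` passes through `0` exactly when
`j ≤ i`, so the chain counts the non-ascents of the operand sequence. The lists
`0, 1, …, 1` and `1, …, 1, 0` have the same multiset of tokens but differ by one non-ascent. -/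

section Ominus

variable {n i j : ℕ}

theorem ominus_eq_zero_of_lt (hij : i < j) (hj : j < n) : ominus n i j = 0 := by
  rw [ominus, steps, if_pos hij, Finset.card_eq_zero, Finset.filter_eq_empty_iff]
  intro t ht
  rw [Finset.mem_Icc] at ht
  rw [Nat.mod_eq_of_lt (by omega)]
  omega

theorem ominus_eq_one_of_le (hji : j ≤ i) (hi : i < n) : ominus n i j = 1 := by
  rw [ominus, steps, if_neg (by omega), Finset.card_eq_one]
  refine ⟨n - i, Finset.ext fun t => ?_⟩
  simp only [Finset.mem_filter, Finset.mem_Icc, Finset.mem_singleton]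
  constructor
  · rintro ⟨ht, hmod⟩
    obtain ⟨c, hc⟩ := Nat.dvd_of_mod_eq_zero hmod
    -- `0 < i + t < 2n`, so the only multiple of `n` it can be is `n` itself.
    have hc1 : c < 2 := by
      have : n * c < n * 2 := by omega
      exact Nat.lt_of_mul_lt_mul_left this
    interval_cases c <;> omega
  · rintro rfl
    exact ⟨by omega, by rw [Nat.add_sub_cancel' hi.le, Nat.mod_self]⟩

end Ominus

section OminusChain

variable {n : ℕ}

theorem ominusChain_append_pair (l : List ℕ) (a b : ℕ) :
    ominusChain n (l ++ [a, b]) = ominusChain n (l ++ [a]) + ominus n a b := by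
  induction l with
  | nil => simp [ominusChain]
  | cons x l ih =>
    rcases l with _ | ⟨y, l⟩
    · simp [ominusChain, Nat.add_comm]
    · simp only [List.cons_append, ominusChain] at ih ⊢
      omega

theorem ominusChain_replicate_append {a : ℕ} (ha : a < n) (k b : ℕ) :
    ominusChain n (List.replicate (k + 1) a ++ [b]) = k + ominus n a b := by
  induction k generalizing b with
  | zero => simp [ominusChain]
  | succ k ih =>
    rw [List.replicate_succ', List.append_assoc, List.singleton_append, ominusChain_append_pair,
      ih, ominus_eq_one_of_le le_rfl ha]

theorem ominusChain_replicate {a : ℕ} (ha : a < n) (k : ℕ) :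
    ominusChain n (List.replicate (k + 1) a) = k := by
  cases k with
  | zero => rfl
  | succ k =>
    rw [List.replicate_succ', ominusChain_replicate_append ha, ominus_eq_one_of_le le_rfl ha]

theorem ominusChain_cons_replicate {a b : ℕ} (hab : a < b) (hb : b < n) (k : ℕ) :
    ominusChain n (a :: List.replicate (k + 1) b) = k := by
  rw [List.replicate_succ, ominusChain, ominus_eq_zero_of_lt hab hb, ← List.replicate_succ,
    ominusChain_replicate hb, Nat.zero_add]

end OminusChain

theorem stmt12 (n M : ℕ) (hn : 3 ≤ n) (hM : 2 ≤ M) :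
    ¬ ∃ g : Multiset (Fin n) → ℕ,
      ∀ l : List (Fin n), l.length = M →
        g (↑l) = ominusChain n (l.map Fin.val) := by
  rintro ⟨g, hg⟩
  obtain ⟨k, rfl⟩ : ∃ k, M = k + 2 := ⟨M - 2, by omega⟩
  have h1n : 1 < n := by omega
  let zero : Fin n := ⟨0, by omega⟩
  let one : Fin n := ⟨1, h1n⟩
  have ascending : ominusChain n ((zero :: List.replicate (k + 1) one).map Fin.val) = k := by
    simpa [zero, one] using ominusChain_cons_replicate zero_lt_one h1n k
  have descending :
      ominusChain n ((List.replicate (k + 1) one ++ [zero]).map Fin.val) = k + 1 := by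
    simpa [zero, one, ominus_eq_one_of_le zero_le_one h1n] using
      ominusChain_replicate_append h1n k 0
  have same_multiset :
      ((List.replicate (k + 1) one ++ [zero] : List (Fin n)) : Multiset (Fin n)) =
        ↑(zero :: List.replicate (k + 1) one) :=
    Multiset.coe_eq_coe.2 (List.perm_append_singleton _ _)
  have chains_agree :=
    (hg _ (by simp)).symm.trans ((congrArg g same_multiset).trans (hg _ (by simp)))
  omega
end
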